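/- arXiv:2601.17624 — 2 statements merged into one kernel-verified Lean document; each statement's English description precedes it below -/
import Mathlib

section
/- Let (M,c) be a simple coloured binary matroid with M = M_1 ⊕_2 M_2 (a 2-sum with E(M_1) ∩ E(M_2) a single element s), such that ε(M) > r(M) + 3 and for i = 1,2 the matroid M_i \ E(M_{3−i}) contains a rainbow circuit. Then M contains two disjoint rainbow circuits C_1, C_2 with |C_1| + |C_2| ≤ r(M) + 2. -/
open Matroid
open scoped symmDiff Classical

namespace RainbowPaper

variable {α : Type*} {κ : Type*}

/-- A circuit of a matroid: a minimal dependent set. -/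
def Circuit (M : Matroid α) (C : Set α) : Prop :=
  M.Dep C ∧ ∀ D, D ⊂ C → ¬ M.Dep D

/-- The rank of a set in a matroid: the supremum of the cardinalities of its
independent subsets. -/
noncomputable def rkSet (M : Matroid α) (X : Set α) : ℕ :=
  sSup {n | ∃ I, M.Indep I ∧ I ⊆ X ∧ I.ncard = n}

/-- The rank of a matroid. -/
noncomputable def rk (M : Matroid α) : ℕ := rkSet M M.E

/-- A matroid is simple if every subset of the ground set with at most two
elements is independent (no loops, no parallel pairs). -/
def Simple (M : Matroid α) : Prop := ∀ X ⊆ M.E, X.ncard ≤ 2 → M.Indep X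

/-- A matroid is binary if it is representable over `GF(2)`. -/
def IsBinary (M : Matroid α) : Prop :=
  ∃ (n : ℕ) (φ : α → (Fin n → ZMod 2)),
    ∀ I ⊆ M.E, (M.Indep I ↔ LinearIndependent (ZMod 2) (fun e : I => φ e.1))

/-- A matroid is regular if it is representable over every field. -/
def IsRegular (M : Matroid α) : Prop :=
  ∀ (F : Type) [Field F], ∃ (n : ℕ) (φ : α → (Fin n → F)),
    ∀ I ⊆ M.E, (M.Indep I ↔ LinearIndependent F (fun e : I => φ e.1))

/-- The signed incidence vector of an edge with given endpoints. -/
noncomputable def incVec {V : Type} (p : V × V) : V → ℚ :=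
  fun v => (if v = p.1 then (1 : ℚ) else 0) - (if v = p.2 then (1 : ℚ) else 0)

/-- A matroid is graphic if it is the cycle matroid of a graph, equivalently it is
represented by the signed incidence vectors of the edges of some graph. -/
def IsGraphic (M : Matroid α) : Prop :=
  ∃ (V : Type) (ends : α → V × V),
    ∀ I ⊆ M.E, (M.Indep I ↔ LinearIndependent ℚ (fun e : I => incVec (ends e.1)))

/-- A matroid is cographic if its dual is graphic. -/
def IsCographic (M : Matroid α) : Prop := IsGraphic M✶

/-- The colour class of the colour `s` in the coloured matroid `(M, c)`. -/
def colourClass (M : Matroid α) (c : α → κ) (s : κ) : Set α := {e ∈ M.E | c e = s}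

/-- A rainbow circuit: a circuit on which the colouring is injective. -/
def RainbowCircuit (M : Matroid α) (c : α → κ) (C : Set α) : Prop :=
  Circuit M C ∧ Set.InjOn c C

/-- A coloured matroid is circuit-achromatic if it has no rainbow circuit. -/
def CircuitAchromatic (M : Matroid α) (c : α → κ) : Prop :=
  ∀ C, Circuit M C → ¬ Set.InjOn c C

/-- The union of the first `j` colour classes in an enumeration `f` of the colours. -/
def initialUnion (M : Matroid α) (c : α → κ) {k : ℕ} (f : Fin k → κ) (j : Fin k) : Set α :=
  ⋃ i ∈ Set.Iic j, colourClass M c (f i)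

/-- A colouring of a matroid is stratified if its (nonempty) colour classes can be
enumerated `X_{i_1}, …, X_{i_k}` so that each initial union
`S_j = X_{i_1} ∪ ⋯ ∪ X_{i_j}` is closed and `1 ≤ r(S_1) < r(S_2) < ⋯ < r(S_k) = r(M)`. -/
def Stratified (M : Matroid α) (c : α → κ) : Prop :=
  ∃ (k : ℕ) (f : Fin k → κ),
    Function.Injective f ∧
    (∀ e ∈ M.E, ∃ j, c e = f j) ∧
    (∀ j, (colourClass M c (f j)).Nonempty) ∧
    (∀ j, M.closure (initialUnion M c f j) = initialUnion M c f j) ∧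
    StrictMono (fun j => rkSet M (initialUnion M c f j)) ∧
    (∀ j, 1 ≤ rkSet M (initialUnion M c f j)) ∧
    (∀ j : Fin k, j.val = k - 1 → rkSet M (initialUnion M c f j) = rk M)

/-- A short rainbow circuit pair: two disjoint rainbow circuits whose sizes sum
to at most `r(M) + 2`. -/
def SRCP (M : Matroid α) (c : α → κ) (C₁ C₂ : Set α) : Prop :=
  RainbowCircuit M c C₁ ∧ RainbowCircuit M c C₂ ∧ Disjoint C₁ C₂ ∧
    C₁.ncard + C₂.ncard ≤ rk M + 2

/-- A short rainbow circuit 4-tuple: four rainbow circuits of total size at most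
`2 r(M) + 4` such that no element belongs to more than two of them. -/
def SRC4 (M : Matroid α) (c : α → κ) (C : Fin 4 → Set α) : Prop :=
  (∀ i, RainbowCircuit M c (C i)) ∧
  (∑ i, (C i).ncard) ≤ 2 * rk M + 4 ∧
  (∀ e : α, (Finset.univ.filter (fun i => e ∈ C i)).card ≤ 2)

/-- A cycle of a matroid: a (pairwise) disjoint union of circuits. -/
def IsCycleSet (M : Matroid α) (X : Set α) : Prop :=
  ∃ 𝒞 : Set (Set α), (∀ C ∈ 𝒞, Circuit M C) ∧ 𝒞.PairwiseDisjoint id ∧ X = ⋃₀ 𝒞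

/-- The 2-sum of two binary matroids along a common element `s`, described by its
circuits: circuits of `M` are the circuits of `M₁` or `M₂` avoiding `s`, together with
the sets `(C₁ - s) ∪ (C₂ - s)` for circuits `Cᵢ` of `Mᵢ` containing `s`. -/
def TwoSum (M M₁ M₂ : Matroid α) (s : α) : Prop :=
  M₁.E ∩ M₂.E = {s} ∧ M.E = (M₁.E ∪ M₂.E) \ {s} ∧
  ∀ C, Circuit M C ↔
    ((Circuit M₁ C ∧ s ∉ C) ∨ (Circuit M₂ C ∧ s ∉ C) ∨
      (∃ C₁ C₂, Circuit M₁ C₁ ∧ Circuit M₂ C₂ ∧ s ∈ C₁ ∧ s ∈ C₂ ∧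
        C = (C₁ \ {s}) ∪ (C₂ \ {s})))

/-!
Put `A = E(M₁) - E(M₂)` and `B = E(M₂) - E(M₁)`, so that `E(M) = A ⊔ B`. A circuit of `M`
inside the union of an independent subset `I` of `A` and an independent subset `J` of `B` must
be `(C₁ - s) ∪ (C₂ - s)` with `C₁`, `C₂` the fundamental circuits of `s` in `M₁` over `I` and in
`M₂` over `J`; so `I ∪ J` contains at most one circuit, and `r(A) + r(B) ≤ r(M) + 1`.

The rainbow circuits `C₁ ⊆ A` and `C₂ ⊆ B` have `|C₁| ≤ r(A) + 1` and `|C₂| ≤ r(B) + 1`, so they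
form a short pair unless `|C₁| + |C₂| = r(M) + 3 < |E(M)|`. Then some `e`, say in `A`, lies
outside `C₁ ∪ C₂`. Swapping `e` for the element of `C₁` of its colour (or for any element) gives a
rainbow dependent set `S ⊆ A` of size `|C₁|`. In a simple binary matroid `S` is not itself a
circuit, since `C₁ △ S` would be a parallel pair; so the circuit inside `S` is a rainbow circuit
of size at most `r(A)`, which replaces `C₁`.
-/

open Set

variable {M : Matroid α} {A B C C₁ C₂ D I J X Y : Set α} {e x : α} {c : α → κ}

lemma circuit_iff_isCircuit : Circuit M C ↔ M.IsCircuit C := by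
  rw [isCircuit_iff]
  refine and_congr_right fun _ => ⟨fun h D hD hDC => ?_, fun h D hDC hD => ?_⟩
  · by_contra hne
    exact h D (ssubset_of_subset_of_ne hDC hne) hD
  · exact hDC.ne (h hD hDC.subset)

lemma rainbowCircuit_iff : RainbowCircuit M c C ↔ M.IsCircuit C ∧ InjOn c C :=
  and_congr_left' circuit_iff_isCircuit

lemma bddAbove_indep_ncard (hfin : M.E.Finite) (X : Set α) :
    BddAbove {n | ∃ I, M.Indep I ∧ I ⊆ X ∧ I.ncard = n} :=
  ⟨M.E.ncard, by rintro n ⟨I, hI, -, rfl⟩; exact ncard_le_ncard hI.subset_ground hfin⟩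

lemma _root_.Matroid.Indep.ncard_le_rkSet (hfin : M.E.Finite) (hI : M.Indep I) (hIX : I ⊆ X) :
    I.ncard ≤ rkSet M X :=
  le_csSup (bddAbove_indep_ncard hfin X) ⟨I, hI, hIX, rfl⟩

lemma exists_indep_ncard_eq_rkSet (hfin : M.E.Finite) (X : Set α) :
    ∃ I, M.Indep I ∧ I ⊆ X ∧ I.ncard = rkSet M X :=
  Nat.sSup_mem (s := {n | ∃ I, M.Indep I ∧ I ⊆ X ∧ I.ncard = n})
    ⟨0, ∅, M.empty_indep, empty_subset X, ncard_empty α⟩ (bddAbove_indep_ncard hfin X)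

lemma rkSet_mono (hfin : M.E.Finite) (hXY : X ⊆ Y) : rkSet M X ≤ rkSet M Y := by
  obtain ⟨I, hI, hIX, hIcard⟩ := exists_indep_ncard_eq_rkSet hfin X
  exact hIcard ▸ hI.ncard_le_rkSet hfin (hIX.trans hXY)

lemma ncard_le_rkSet_add_one_of_isCircuit_unique (hfin : M.E.Finite) (hX : X ⊆ M.E)
    (huniq : ∀ C C', M.IsCircuit C → M.IsCircuit C' → C ⊆ X → C' ⊆ X → C = C') :
    X.ncard ≤ rkSet M X + 1 := by
  by_cases hXi : M.Indep X
  · exact (hXi.ncard_le_rkSet hfin subset_rfl).trans (Nat.le_succ _)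
  obtain ⟨C, hCX, hC⟩ := (M.not_indep_iff hX).1 hXi |>.exists_isCircuit_subset
  obtain ⟨x, hxC⟩ := hC.nonempty
  have hind : M.Indep (X \ {x}) := by
    by_contra hdep
    obtain ⟨C', hC'X, hC'⟩ :=
      (M.not_indep_iff (sdiff_subset.trans hX)).1 hdep |>.exists_isCircuit_subset
    have hxC' : x ∈ C' := huniq C C' hC hC' hCX (hC'X.trans sdiff_subset) ▸ hxC
    exact (hC'X hxC').2 rfl
  have := ncard_sdiff_singleton_add_one (hCX hxC) (hfin.subset hX)
  have := hind.ncard_le_rkSet hfin (sdiff_subset (t := {x}))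
  omega

lemma _root_.Matroid.IsCircuit.ncard_le_rkSet_add_one (hfin : M.E.Finite) (hC : M.IsCircuit C)
    (hCX : C ⊆ X) : C.ncard ≤ rkSet M X + 1 := by
  obtain ⟨x, hx⟩ := hC.nonempty
  have := ncard_sdiff_singleton_add_one hx (hfin.subset hC.subset_ground)
  have := (hC.sdiff_singleton_indep hx).ncard_le_rkSet hfin (sdiff_subset.trans hCX)
  omega

namespace TwoSum

variable {M₁ M₂ : Matroid α} {s : α}

lemma symm (h : TwoSum M M₁ M₂ s) : TwoSum M M₂ M₁ s := by
  obtain ⟨hinter, hE, hcirc⟩ := h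
  refine ⟨by rwa [inter_comm], by rwa [union_comm], fun C => (hcirc C).trans ?_⟩
  refine ⟨fun h => ?_, fun h => ?_⟩ <;>
  · obtain h | h | ⟨C₁, C₂, h₁, h₂, hs₁, hs₂, rfl⟩ := h
    · exact .inr (.inl h)
    · exact .inl h
    · exact .inr (.inr ⟨C₂, C₁, h₂, h₁, hs₂, hs₁, union_comm _ _⟩)

lemma mem_right (h : TwoSum M M₁ M₂ s) : s ∈ M₂.E :=
  (h.1.symm.subset rfl).2

lemma ground_eq (h : TwoSum M M₁ M₂ s) : M.E = (M₁.E \ M₂.E) ∪ (M₂.E \ M₁.E) := by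
  rw [h.2.1, ← h.1]
  exact (symmDiff_eq_sup_sdiff_inf _ _).symm

lemma isCircuit_of_left (h : TwoSum M M₁ M₂ s) (hC : M₁.IsCircuit C) (hs : s ∉ C) :
    M.IsCircuit C :=
  circuit_iff_isCircuit.1 <| (h.2.2 C).2 <| .inl ⟨circuit_iff_isCircuit.2 hC, hs⟩

lemma indep_left (h : TwoSum M M₁ M₂ s) (hI : M.Indep I) (hIE : I ⊆ M₁.E \ M₂.E) :
    M₁.Indep I := by
  by_contra hdep
  obtain ⟨C, hCI, hC⟩ :=
    (M₁.not_indep_iff (hIE.trans sdiff_subset)).1 hdep |>.exists_isCircuit_subset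
  have hs : s ∉ C := fun hs => (hIE (hCI hs)).2 h.mem_right
  exact (h.isCircuit_of_left hC hs).not_indep (hI.subset hCI)

lemma eq_fundCircuit_union (h : TwoSum M M₁ M₂ s) (hI : M.Indep I) (hIE : I ⊆ M₁.E \ M₂.E)
    (hJ : M.Indep J) (hJE : J ⊆ M₂.E \ M₁.E) (hD : M.IsCircuit D) (hDIJ : D ⊆ I ∪ J) :
    D = M₁.fundCircuit s I \ {s} ∪ M₂.fundCircuit s J \ {s} := by
  have hM₁J : Disjoint M₁.E J := disjoint_sdiff_right.mono_right hJE
  have hIM₂ : Disjoint I M₂.E := disjoint_sdiff_left.mono_left hIE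
  obtain ⟨hD₁, -⟩ | ⟨hD₂, -⟩ | ⟨C₁, C₂, hC₁, hC₂, -, -, rfl⟩ :=
    (h.2.2 D).1 (circuit_iff_isCircuit.2 hD)
  · exact (hD.not_indep <| hI.subset <|
      (hM₁J.mono_left hD₁.1.subset_ground).subset_left_of_subset_union hDIJ).elim
  · exact (hD.not_indep <| hJ.subset <|
      (hIM₂.symm.mono_left hD₂.1.subset_ground).subset_right_of_subset_union hDIJ).elim
  rw [circuit_iff_isCircuit] at hC₁ hC₂
  have hC₁I : C₁ ⊆ insert s I := sdiff_subset_iff.1 <| Disjoint.subset_left_of_subset_union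
    (subset_union_left.trans hDIJ) (hM₁J.mono_left (sdiff_subset.trans hC₁.subset_ground))
  have hC₂J : C₂ ⊆ insert s J := sdiff_subset_iff.1 <| Disjoint.subset_right_of_subset_union
    (subset_union_right.trans hDIJ) (hIM₂.symm.mono_left (sdiff_subset.trans hC₂.subset_ground))
  rw [← hC₁.eq_fundCircuit_of_subset (h.indep_left hI hIE) hC₁I,
    ← hC₂.eq_fundCircuit_of_subset (h.symm.indep_left hJ hJE) hC₂J]

lemma rkSet_add_rkSet_le (h : TwoSum M M₁ M₂ s) (hfin : M.E.Finite) :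
    rkSet M (M₁.E \ M₂.E) + rkSet M (M₂.E \ M₁.E) ≤ rk M + 1 := by
  obtain ⟨I, hI, hIE, hIcard⟩ := exists_indep_ncard_eq_rkSet hfin (M₁.E \ M₂.E)
  obtain ⟨J, hJ, hJE, hJcard⟩ := exists_indep_ncard_eq_rkSet hfin (M₂.E \ M₁.E)
  have hIJE : I ∪ J ⊆ M.E := union_subset hI.subset_ground hJ.subset_ground
  have hcard := ncard_le_rkSet_add_one_of_isCircuit_unique hfin hIJE
    fun D D' hD hD' hDIJ hD'IJ => (h.eq_fundCircuit_union hI hIE hJ hJE hD hDIJ).trans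
      (h.eq_fundCircuit_union hI hIE hJ hJE hD' hD'IJ).symm
  rw [ncard_union_eq (disjoint_sdiff_sdiff.mono hIE hJE) (hfin.subset hI.subset_ground)
    (hfin.subset hJ.subset_ground)] at hcard
  have : rkSet M (I ∪ J) ≤ rk M := rkSet_mono hfin hIJE
  omega

end TwoSum

lemma exists_injOn_insert_sdiff_singleton (hinj : InjOn c C) (hC : C.Nonempty) (heC : e ∉ C) :
    ∃ x ∈ C, InjOn c (insert e (C \ {x})) := by
  have key : ∀ x ∈ C, (∀ y ∈ C \ {x}, c y ≠ c e) → InjOn c (insert e (C \ {x})) :=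
    fun x _ hx => (injOn_insert fun h => heC h.1).2
      ⟨hinj.mono sdiff_subset, fun ⟨y, hy, hye⟩ => hx y hy hye⟩
  by_cases hcol : ∃ x ∈ C, c x = c e
  · obtain ⟨x, hx, hxe⟩ := hcol
    exact ⟨x, hx, key x hx fun y hy hye => hy.2 (hinj hy.1 hx (hye.trans hxe.symm))⟩
  · obtain ⟨x, hx⟩ := hC
    exact ⟨x, hx, key x hx fun y hy hye => hcol ⟨y, hy.1, hye⟩⟩

section Binary

variable {V : Type*} [AddCommGroup V] [Module (ZMod 2) V] {φ : α → V}

lemma sum_eq_zero_of_isCircuit (hφ : ∀ I ⊆ M.E, M.Indep I ↔ LinearIndepOn (ZMod 2) φ I)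
    {F : Finset α} (hF : M.IsCircuit F) : ∑ x ∈ F, φ x = 0 := by
  obtain ⟨l, hlF, hl, hl0⟩ :=
    linearDepOn_iff.1 fun h => hF.not_indep ((hφ _ hF.subset_ground).2 h)
  rw [Finsupp.mem_supported] at hlF
  have hsupp : l.support = F := by
    by_contra hne
    have hlind : LinearIndepOn (ZMod 2) φ l.support :=
      (hφ _ (hlF.trans hF.subset_ground)).1 <|
        hF.ssubset_indep (ssubset_of_subset_of_ne hlF (Finset.coe_injective.ne hne))
    exact hl0 <| linearIndepOn_iff.1 hlind l (Finsupp.mem_supported_support _ _) hl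
  have hone : ∀ a : ZMod 2, a ≠ 0 → a = 1 := by decide
  rw [← hsupp, ← hl]
  refine Finset.sum_congr rfl fun x hx => ?_
  rw [hone _ (Finsupp.mem_support_iff.1 hx), one_smul]

lemma eq_of_isCircuit_insert (hφ : ∀ I ⊆ M.E, M.Indep I ↔ LinearIndepOn (ZMod 2) φ I)
    {F : Finset α} (hx : x ∉ F) (he : e ∉ F) (hxF : M.IsCircuit ↑(insert x F))
    (heF : M.IsCircuit ↑(insert e F)) : φ x = φ e := by
  have hx0 := sum_eq_zero_of_isCircuit hφ hxF
  have he0 := sum_eq_zero_of_isCircuit hφ heF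
  rw [Finset.sum_insert hx] at hx0
  rw [Finset.sum_insert he] at he0
  exact add_right_cancel (hx0.trans he0.symm)

lemma not_isCircuit_insert_sdiff_singleton
    (hφ : ∀ I ⊆ M.E, M.Indep I ↔ LinearIndepOn (ZMod 2) φ I) (hfin : M.E.Finite)
    (hsimple : Simple M) (hC : M.IsCircuit C) (hx : x ∈ C) (he : e ∈ M.E) (heC : e ∉ C) :
    ¬ M.IsCircuit (insert e (C \ {x})) := by
  intro hS
  obtain ⟨F, hF⟩ : ∃ F : Finset α, ↑F = C \ {x} :=
    (hfin.subset (sdiff_subset.trans hC.subset_ground)).exists_finset_coe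
  have hxe : x ≠ e := ne_of_mem_of_not_mem hx heC
  have hφxe : φ x = φ e := by
    refine eq_of_isCircuit_insert (F := F) hφ (fun h => ?_) (fun h => ?_) ?_ ?_
    · exact (hF ▸ Finset.mem_coe.2 h : x ∈ C \ {x}).2 rfl
    · exact heC (hF ▸ Finset.mem_coe.2 h : e ∈ C \ {x}).1
    · rwa [Finset.coe_insert, hF, insert_sdiff_singleton, insert_eq_of_mem hx]
    · rwa [Finset.coe_insert, hF]
  have hxeE : {x, e} ⊆ M.E := pair_subset (hC.subset_ground hx) he
  have hind := (hφ _ hxeE).1 (hsimple _ hxeE (ncard_pair hxe).le)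
  exact hxe (hind.injOn (mem_insert _ _) (mem_insert_of_mem _ rfl) hφxe)

lemma exists_injOn_isCircuit_ncard_le_rkSet
    (hφ : ∀ I ⊆ M.E, M.Indep I ↔ LinearIndepOn (ZMod 2) φ I) (hfin : M.E.Finite)
    (hsimple : Simple M) (hAE : A ⊆ M.E) (hC : M.IsCircuit C) (hCA : C ⊆ A) (hinj : InjOn c C)
    (heA : e ∈ A) (heC : e ∉ C) :
    ∃ D, M.IsCircuit D ∧ D ⊆ A ∧ InjOn c D ∧ D.ncard ≤ rkSet M A := by
  by_cases hshort : C.ncard ≤ rkSet M A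
  · exact ⟨C, hC, hCA, hinj, hshort⟩
  obtain ⟨x, hx, hSinj⟩ := exists_injOn_insert_sdiff_singleton hinj hC.nonempty heC
  set S := insert e (C \ {x})
  have hSA : S ⊆ A := insert_subset heA (sdiff_subset.trans hCA)
  have hCfin : C.Finite := hfin.subset (hCA.trans hAE)
  have hScard : S.ncard = C.ncard := by
    rw [ncard_insert_of_notMem (fun h => heC h.1) hCfin.sdiff,
      ncard_sdiff_singleton_add_one hx hCfin]
  have hSdep : M.Dep S := (M.not_indep_iff (hSA.trans hAE)).1 fun hS => by
    have := hS.ncard_le_rkSet hfin hSA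
    omega
  obtain ⟨D, hDS, hD⟩ := hSdep.exists_isCircuit_subset
  have hDS' : D ⊂ S := ssubset_of_subset_of_ne hDS fun hDS =>
    not_isCircuit_insert_sdiff_singleton hφ hfin hsimple hC hx (hAE heA) heC
      (show M.IsCircuit S from hDS ▸ hD)
  have := ncard_lt_ncard hDS' (hfin.subset (hSA.trans hAE))
  have := hC.ncard_le_rkSet_add_one hfin hCA
  exact ⟨D, hD, hDS.trans hSA, hSinj.mono hDS, by omega⟩

lemma exists_srcp_of_rkSet_add_rkSet_le
    (hφ : ∀ I ⊆ M.E, M.Indep I ↔ LinearIndepOn (ZMod 2) φ I) (hfin : M.E.Finite)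
    (hsimple : Simple M) (hE : M.E = A ∪ B) (hAB : Disjoint A B)
    (hrk : rkSet M A + rkSet M B ≤ rk M + 1) (hsize : rk M + 3 < M.E.ncard)
    (hC₁ : RainbowCircuit M c C₁) (hC₁A : C₁ ⊆ A) (hC₂ : RainbowCircuit M c C₂)
    (hC₂B : C₂ ⊆ B) : ∃ C₁ C₂, SRCP M c C₁ C₂ := by
  rw [rainbowCircuit_iff] at hC₁ hC₂
  have h₁ := hC₁.1.ncard_le_rkSet_add_one hfin hC₁A
  have h₂ := hC₂.1.ncard_le_rkSet_add_one hfin hC₂B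
  by_cases hshort : C₁.ncard + C₂.ncard ≤ rk M + 2
  · exact ⟨C₁, C₂, rainbowCircuit_iff.2 hC₁, rainbowCircuit_iff.2 hC₂, hAB.mono hC₁A hC₂B, hshort⟩
  obtain ⟨e, heE, heC⟩ : (M.E \ (C₁ ∪ C₂)).Nonempty := by
    refine sdiff_nonempty_of_ncard_lt_ncard ?_ (hfin.subset ?_)
    · have := ncard_union_le C₁ C₂
      omega
    · exact union_subset hC₁.1.subset_ground hC₂.1.subset_ground
  rcases hE ▸ heE with heA | heB
  · obtain ⟨D, hD, hDA, hinj, hDcard⟩ := exists_injOn_isCircuit_ncard_le_rkSet hφ hfin hsimple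
      (hE ▸ subset_union_left) hC₁.1 hC₁A hC₁.2 heA fun h => heC (.inl h)
    exact ⟨D, C₂, rainbowCircuit_iff.2 ⟨hD, hinj⟩, rainbowCircuit_iff.2 hC₂,
      hAB.mono hDA hC₂B, by omega⟩
  · obtain ⟨D, hD, hDB, hinj, hDcard⟩ := exists_injOn_isCircuit_ncard_le_rkSet hφ hfin hsimple
      (hE ▸ subset_union_right) hC₂.1 hC₂B hC₂.2 heB fun h => heC (.inr h)
    exact ⟨C₁, D, rainbowCircuit_iff.2 hC₁, rainbowCircuit_iff.2 ⟨hD, hinj⟩,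
      hAB.mono hC₁A hDB, by omega⟩

end Binary

/-- a simple coloured binary matroid which is a 2-sum with more than
`r(M) + 3` elements, each part containing a rainbow circuit, has a short rainbow
circuit pair. -/
theorem srcp_of_twoSum (M M₁ M₂ : Matroid α) (s : α)
    (hM : IsBinary M) (hfin : M.E.Finite) (hsimple : Simple M)
    (hsum : TwoSum M M₁ M₂ s) (c : α → κ)
    (hsize : rk M + 3 < M.E.ncard)
    (h₁ : ∃ C, Circuit (M₁ ↾ (M₁.E \ M₂.E)) C ∧ Set.InjOn c C)
    (h₂ : ∃ C, Circuit (M₂ ↾ (M₂.E \ M₁.E)) C ∧ Set.InjOn c C) :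
    ∃ C₁ C₂, SRCP M c C₁ C₂ := by
  obtain ⟨n, φ, hφ⟩ := hM
  obtain ⟨C₁, hC₁, hinj₁⟩ := h₁
  obtain ⟨C₂, hC₂, hinj₂⟩ := h₂
  rw [circuit_iff_isCircuit, restrict_isCircuit_iff sdiff_subset] at hC₁ hC₂
  have hs₁ : s ∉ C₁ := fun hs => (hC₁.2 hs).2 hsum.mem_right
  have hs₂ : s ∉ C₂ := fun hs => (hC₂.2 hs).2 hsum.symm.mem_right
  exact exists_srcp_of_rkSet_add_rkSet_le hφ hfin hsimple hsum.ground_eq disjoint_sdiff_sdiff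
    (hsum.rkSet_add_rkSet_le hfin) hsize
    (rainbowCircuit_iff.2 ⟨hsum.isCircuit_of_left hC₁.1 hs₁, hinj₁⟩) hC₁.2
    (rainbowCircuit_iff.2 ⟨hsum.symm.isCircuit_of_left hC₂.1 hs₂, hinj₂⟩) hC₂.2
end RainbowPaper
end

section
/- Let G be a graph built as follows: G_1 consists of a single edge e_1 = v_{11}v_{12} of colour 1; for i = 2,...,n−1, G_i is obtained from G_{i−1} by adding a new vertex v_i together with two edges e_{i1} = v_i v_{i1} and e_{i2} = v_i v_{i2}, both of colour i, where v_{i1}, v_{i2} are distinct vertices of G_{i−1}. Set G = G_{n−1}. Then for every pair of distinct vertices u, v of G there is a rainbow path (a path whose edges have pairwise distinct colours) from u to v of length at most ⌊n/2⌋; moreover, when n is even, at most one pair of vertices u,v requires a rainbow path of length exactly n/2. -/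
open scoped Classical

namespace RainbowPaper

/-- The inductively constructed coloured graph on `n + 2` vertices: vertex `0` and
`1` are `v₁₁` and `v₁₂`, joined by the edge of colour `1`; every vertex `i ≥ 2` is
joined to the two distinct earlier vertices `f i` and `g i` by two edges of colour
`i`.  (Since each edge joins a vertex to a strictly smaller one, the colour of an
edge is the larger of its two endpoints.) -/
def constructionGraph (n : ℕ) (f g : Fin (n + 2) → Fin (n + 2)) :
    SimpleGraph (Fin (n + 2)) where
  Adj a b := a ≠ b ∧ (s(a, b) = s(0, 1) ∨
    ∃ i : Fin (n + 2), 2 ≤ i.val ∧ (s(a, b) = s(i, f i) ∨ s(a, b) = s(i, g i)))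
  symm := by
    constructor
    rintro a b ⟨h1, h2⟩
    refine ⟨h1.symm, ?_⟩
    rw [Sym2.eq_swap]
    exact h2
  loopless := ⟨fun a h => h.1 rfl⟩

/-- The hypotheses of the construction: each new vertex `i ≥ 2` is joined to two
distinct earlier vertices. -/
def ConstructionHyp (n : ℕ) (f g : Fin (n + 2) → Fin (n + 2)) : Prop :=
  ∀ i : Fin (n + 2), 2 ≤ i.val → f i < i ∧ g i < i ∧ f i ≠ g i

/-- The colour of an edge of the construction graph: the larger of its two
endpoints (with the initial edge `{0, 1}` getting colour `1`). -/
def edgeColour {n : ℕ} : Sym2 (Fin (n + 2)) → ℕ :=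
  Sym2.lift ⟨fun a b => max a.val b.val, fun a b => by simp [max_comm]⟩

/-- A rainbow path: a path whose edges receive pairwise distinct colours. -/
def IsRainbowPath {V : Type*} (G : SimpleGraph V) (col : Sym2 V → ℕ) {u v : V}
    (p : G.Walk u v) : Prop :=
  p.IsPath ∧ (p.edges.map col).Nodup

/-- Two walks are edge-disjoint if no edge lies on both. -/
def EdgeDisjoint {V : Type*} {G : SimpleGraph V} {u v u' v' : V}
    (p : G.Walk u v) (q : G.Walk u' v') : Prop :=
  ∀ e, e ∈ p.edges → e ∉ q.edges

/-!
Induct on the level `k`, i.e. on the subgraph `G_k` induced by the vertices `0, …, k`, and call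
`u ≠ v` a far pair of level `k` if every rainbow path of `G_k` between them has length at least
`⌊(k+1)/2⌋`. Besides the distance bound, carry along: for odd `k` there is at most one far pair,
for even `k` the far pairs contain no 4-cycle `a v b w`.

The new vertex `t = k + 1` reaches an old vertex `v` through one of its two edges of the new
colour, to `f t` or `g t`, followed by a short rainbow path of `G_k`; for odd `k`, uniqueness of
the far pair lets one pick a neighbour that is not far from `v`. For even `k`, every far pair of
level `k + 1` contains `t`, and its other end is far from both `f t` and `g t` at level `k`, so two
such pairs would give a 4-cycle. For odd `k`, a 4-cycle of level `k + 1` has two far pairs that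
share a vertex and avoid `t`; they stay far at level `k`, contradicting uniqueness there.
-/

open SimpleGraph

section Rainbow

variable {V : Type*} {G : SimpleGraph V} {col : Sym2 V → ℕ} {u v w : V}

lemma isRainbowPath_nil : IsRainbowPath G col (Walk.nil : G.Walk u u) :=
  ⟨Walk.IsPath.nil, by simp⟩

lemma IsRainbowPath.reverse {p : G.Walk u v} (hp : IsRainbowPath G col p) :
    IsRainbowPath G col p.reverse :=
  ⟨hp.1.reverse, by simpa [Walk.edges_reverse] using hp.2⟩

lemma IsRainbowPath.cons {p : G.Walk v w} (hp : IsRainbowPath G col p) (h : G.Adj u v)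
    (hu : u ∉ p.support) (hc : col s(u, v) ∉ p.edges.map col) :
    IsRainbowPath G col (Walk.cons h p) :=
  ⟨hp.1.cons hu, by rw [Walk.edges_cons, List.map_cons, List.nodup_cons]; exact ⟨hc, hp.2⟩⟩

lemma isRainbowPath_toWalk (h : G.Adj u v) : IsRainbowPath G col h.toWalk :=
  ⟨h.isPath_toWalk, by simp [h.edges_toWalk]⟩

end Rainbow

section Level

variable {n : ℕ} {G : SimpleGraph (Fin (n + 2))} {k : ℕ} {t u v : Fin (n + 2)}

lemma edgeColour_mk (a b : Fin (n + 2)) : edgeColour s(a, b) = max a.val b.val := rfl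

/-- A rainbow path of `G_k`, the subgraph induced by the vertices `0, …, k`. -/
def IsLevelRainbowPath (k : ℕ) (p : G.Walk u v) : Prop :=
  IsRainbowPath G edgeColour p ∧ ∀ x ∈ p.support, x.val ≤ k

lemma isLevelRainbowPath_nil (hu : u.val ≤ k) :
    IsLevelRainbowPath k (Walk.nil : G.Walk u u) :=
  ⟨isRainbowPath_nil, by simpa using hu⟩

namespace IsLevelRainbowPath

variable {p : G.Walk u v}

lemma reverse (hp : IsLevelRainbowPath k p) : IsLevelRainbowPath k p.reverse :=
  ⟨hp.1.reverse, by simpa using hp.2⟩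

lemma mono {l : ℕ} (hp : IsLevelRainbowPath k p) (hkl : k ≤ l) : IsLevelRainbowPath l p :=
  ⟨hp.1, fun x hx => (hp.2 x hx).trans hkl⟩

lemma edgeColour_le (hp : IsLevelRainbowPath k p) {e : Sym2 (Fin (n + 2))}
    (he : e ∈ p.edges) : edgeColour e ≤ k := by
  induction e using Sym2.ind with
  | _ a b =>
    rw [edgeColour_mk, max_le_iff]
    exact ⟨hp.2 a (p.fst_mem_support_of_mem_edges he),
      hp.2 b (p.snd_mem_support_of_mem_edges he)⟩

/-- The new edge has colour `k + 1`, larger than every colour used inside `G_k`. -/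
lemma cons_top (hp : IsLevelRainbowPath k p) (ht : t.val = k + 1) (h : G.Adj t u) :
    IsLevelRainbowPath (k + 1) (Walk.cons h p) := by
  have hu : u.val ≤ k := hp.2 u p.start_mem_support
  refine ⟨hp.1.cons h (fun hmem => by have := hp.2 t hmem; omega) ?_, ?_⟩
  · rw [List.mem_map]
    rintro ⟨e, he, hce⟩
    have := hp.edgeColour_le he
    rw [hce, edgeColour_mk] at this
    omega
  · simp only [Walk.support_cons, List.mem_cons, forall_eq_or_imp]
    exact ⟨ht.le, fun x hx => (hp.2 x hx).trans k.le_succ⟩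

end IsLevelRainbowPath

end Level

section Construction

variable {n : ℕ} {f g : Fin (n + 2) → Fin (n + 2)} {k : ℕ} {t u v : Fin (n + 2)}

lemma ConstructionHyp.adj_fst (hfg : ConstructionHyp n f g) {i : Fin (n + 2)}
    (hi : 2 ≤ i.val) : (constructionGraph n f g).Adj i (f i) :=
  ⟨(hfg i hi).1.ne', Or.inr ⟨i, hi, Or.inl rfl⟩⟩

lemma ConstructionHyp.adj_snd (hfg : ConstructionHyp n f g) {i : Fin (n + 2)}
    (hi : 2 ≤ i.val) : (constructionGraph n f g).Adj i (g i) :=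
  ⟨(hfg i hi).2.1.ne', Or.inr ⟨i, hi, Or.inr rfl⟩⟩

lemma sym2_eq_zero_one (hu : u.val ≤ 1) (hv : v.val ≤ 1) (huv : u ≠ v) :
    s(u, v) = s((0 : Fin (n + 2)), 1) := by
  have hne : u.val ≠ v.val := fun h => huv (Fin.ext h)
  rcases Nat.le_one_iff_eq_zero_or_eq_one.1 hu with hu0 | hu1
  · rw [show u = 0 from Fin.ext hu0, show v = 1 from Fin.ext (by rw [Fin.val_one]; omega)]
  · rw [show u = 1 from Fin.ext (by rw [Fin.val_one, hu1]),
      show v = 0 from Fin.ext (by rw [Fin.val_zero]; omega), Sym2.eq_swap]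

variable (f g)

def ShortRainbowPaths (k : ℕ) : Prop :=
  ∀ u v : Fin (n + 2), u.val ≤ k → v.val ≤ k →
    ∃ p : (constructionGraph n f g).Walk u v, IsLevelRainbowPath k p ∧ p.length ≤ (k + 1) / 2

def IsFarPair (k : ℕ) (u v : Fin (n + 2)) : Prop :=
  u ≠ v ∧ u.val ≤ k ∧ v.val ≤ k ∧
    ∀ p : (constructionGraph n f g).Walk u v, IsLevelRainbowPath k p → (k + 1) / 2 ≤ p.length

def FarPairUnique (k : ℕ) : Prop :=
  ∀ u v u' v' : Fin (n + 2), IsFarPair f g k u v → IsFarPair f g k u' v' → s(u, v) = s(u', v')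

def NoFarSquare (k : ℕ) : Prop :=
  ∀ a b v w : Fin (n + 2), a ≠ b → v ≠ w → IsFarPair f g k a v → IsFarPair f g k a w →
    IsFarPair f g k b v → IsFarPair f g k b w → False

variable {f g}

lemma IsFarPair.symm (h : IsFarPair f g k u v) : IsFarPair f g k v u :=
  ⟨h.1.symm, h.2.2.1, h.2.1, fun p hp => by simpa using h.2.2.2 p.reverse hp.reverse⟩

lemma exists_short_of_not_isFarPair (hk : 1 ≤ k) (hu : u.val ≤ k) (hv : v.val ≤ k)
    (h : ¬ IsFarPair f g k u v) :
    ∃ p : (constructionGraph n f g).Walk u v,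
      IsLevelRainbowPath k p ∧ p.length < (k + 1) / 2 := by
  by_cases huv : u = v
  · subst huv
    exact ⟨Walk.nil, isLevelRainbowPath_nil hu, by simp; omega⟩
  · simpa [IsFarPair, huv, hu, hv] using h

lemma IsFarPair.of_succ (hk : k % 2 = 1) (h : IsFarPair f g (k + 1) u v) (hu : u.val ≤ k)
    (hv : v.val ≤ k) : IsFarPair f g k u v :=
  ⟨h.1, hu, hv, fun p hp => by have := h.2.2.2 p (hp.mono k.le_succ); omega⟩

lemma IsFarPair.val_eq_succ_or_val_eq_succ (hP : ShortRainbowPaths f g k) (hk : k % 2 = 0)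
    (h : IsFarPair f g (k + 1) u v) : u.val = k + 1 ∨ v.val = k + 1 := by
  by_contra! hne
  obtain ⟨p, hp, hlen⟩ := hP u v (by have := h.2.1; omega) (by have := h.2.2.1; omega)
  have := h.2.2.2 p (hp.mono k.le_succ)
  omega

/-- For even `k` the bound `⌊(k+2)/2⌋` exceeds `⌊(k+1)/2⌋`, so the first edge `t x` can be
split off a far pair. -/
lemma IsFarPair.of_succ_cons (hk : k % 2 = 0) (hk2 : 2 ≤ k) (ht : t.val = k + 1)
    {x : Fin (n + 2)} (hx : x.val ≤ k) (hadj : (constructionGraph n f g).Adj t x)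
    (h : IsFarPair f g (k + 1) t v) : IsFarPair f g k x v := by
  have hv : v.val ≤ k := by
    have : v.val ≠ t.val := fun h' => h.1 (Fin.ext h'.symm)
    have := h.2.2.1
    omega
  have far : ∀ q : (constructionGraph n f g).Walk x v,
      IsLevelRainbowPath k q → (k + 1) / 2 ≤ q.length := fun q hq => by
    have := h.2.2.2 _ (hq.cons_top ht hadj)
    rw [Walk.length_cons] at this
    omega
  refine ⟨?_, hx, hv, far⟩
  rintro rfl
  have := far Walk.nil (isLevelRainbowPath_nil hx)
  simp only [Walk.length_nil] at this
  omega

lemma shortRainbowPaths_one : ShortRainbowPaths f g 1 := by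
  intro u v hu hv
  by_cases huv : u = v
  · subst huv
    exact ⟨Walk.nil, isLevelRainbowPath_nil hu, by simp⟩
  · have h : (constructionGraph n f g).Adj u v := ⟨huv, Or.inl (sym2_eq_zero_one hu hv huv)⟩
    exact ⟨h.toWalk, ⟨isRainbowPath_toWalk h, by simp [h.support_toWalk, hu, hv]⟩,
      by simp [h.length_toWalk]⟩

lemma farPairUnique_one : FarPairUnique f g 1 := fun _ _ _ _ h h' => by
  rw [sym2_eq_zero_one h.2.1 h.2.2.1 h.1, sym2_eq_zero_one h'.2.1 h'.2.2.1 h'.1]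

lemma exists_path_from_top (hfg : ConstructionHyp n f g) (hk : 1 ≤ k)
    (hP : ShortRainbowPaths f g k) (hO : k % 2 = 1 → FarPairUnique f g k)
    (ht : t.val = k + 1) (hv : v.val ≤ k) :
    ∃ p : (constructionGraph n f g).Walk t v,
      IsLevelRainbowPath (k + 1) p ∧ p.length ≤ (k + 2) / 2 := by
  have ht2 : 2 ≤ t.val := by omega
  obtain ⟨hft, hgt, hfgt⟩ := hfg t ht2
  have hfk : (f t).val ≤ k := by have := Fin.lt_def.1 hft; omega
  have hgk : (g t).val ≤ k := by have := Fin.lt_def.1 hgt; omega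
  suffices ∃ x, ∃ h : (constructionGraph n f g).Adj t x,
      ∃ q : (constructionGraph n f g).Walk x v,
      IsLevelRainbowPath k q ∧ q.length + 1 ≤ (k + 2) / 2 by
    obtain ⟨x, h, q, hq, hlen⟩ := this
    exact ⟨Walk.cons h q, hq.cons_top ht h, by rwa [Walk.length_cons]⟩
  rcases Nat.mod_two_eq_zero_or_one k with heven | hodd
  · obtain ⟨q, hq, hlen⟩ := hP (f t) v hfk hv
    exact ⟨f t, hfg.adj_fst ht2, q, hq, by omega⟩
  by_cases hfar : IsFarPair f g k (f t) v
  · have hgfar : ¬ IsFarPair f g k (g t) v := fun hgfar =>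
      hfgt (Sym2.congr_left.1 (hO hodd _ _ _ _ hfar hgfar))
    obtain ⟨q, hq, hlen⟩ := exists_short_of_not_isFarPair hk hgk hv hgfar
    exact ⟨g t, hfg.adj_snd ht2, q, hq, by omega⟩
  · obtain ⟨q, hq, hlen⟩ := exists_short_of_not_isFarPair hk hfk hv hfar
    exact ⟨f t, hfg.adj_fst ht2, q, hq, by omega⟩

lemma ShortRainbowPaths.succ (hfg : ConstructionHyp n f g) (hk : 1 ≤ k)
    (hP : ShortRainbowPaths f g k) (hO : k % 2 = 1 → FarPairUnique f g k) :
    ShortRainbowPaths f g (k + 1) := by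
  intro u v hu hv
  rcases Nat.lt_or_eq_of_le hu with hu' | hu' <;> rcases Nat.lt_or_eq_of_le hv with hv' | hv'
  · obtain ⟨p, hp, hlen⟩ := hP u v (by omega) (by omega)
    exact ⟨p, hp.mono k.le_succ, by omega⟩
  · obtain ⟨p, hp, hlen⟩ := exists_path_from_top hfg hk hP hO hv' (by omega : u.val ≤ k)
    exact ⟨p.reverse, hp.reverse, by rwa [Walk.length_reverse]⟩
  · exact exists_path_from_top hfg hk hP hO hu' (by omega)
  · obtain rfl : u = v := Fin.ext (hu'.trans hv'.symm)
    exact ⟨Walk.nil, isLevelRainbowPath_nil hu, by simp⟩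

lemma FarPairUnique.succ (hfg : ConstructionHyp n f g) (hk : 1 ≤ k) (heven : k % 2 = 0)
    (hP : ShortRainbowPaths f g k) (hE : NoFarSquare f g k) : FarPairUnique f g (k + 1) := by
  have through_top : ∀ u v, IsFarPair f g (k + 1) u v →
      ∃ t w, t.val = k + 1 ∧ IsFarPair f g (k + 1) t w ∧ s(u, v) = s(t, w) := by
    intro u v h
    rcases h.val_eq_succ_or_val_eq_succ hP heven with hu | hv
    · exact ⟨u, v, hu, h, rfl⟩
    · exact ⟨v, u, hv, h.symm, Sym2.eq_swap⟩
  intro u v u' v' h h'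
  obtain ⟨t, w, ht, htw, e⟩ := through_top u v h
  obtain ⟨t', w', ht', htw', e'⟩ := through_top u' v' h'
  obtain rfl : t = t' := Fin.ext (ht.trans ht'.symm)
  rw [e, e']
  by_contra hne
  have hww' : w ≠ w' := fun hw => hne (by rw [hw])
  have ht2 : 2 ≤ t.val := by omega
  obtain ⟨hft, hgt, hfgt⟩ := hfg t ht2
  have hfk : (f t).val ≤ k := by have := Fin.lt_def.1 hft; omega
  have hgk : (g t).val ≤ k := by have := Fin.lt_def.1 hgt; omega
  have hk2 : 2 ≤ k := by omega
  exact hE (f t) (g t) w w' hfgt hww'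
    (htw.of_succ_cons heven hk2 ht hfk (hfg.adj_fst ht2))
    (htw'.of_succ_cons heven hk2 ht hfk (hfg.adj_fst ht2))
    (htw.of_succ_cons heven hk2 ht hgk (hfg.adj_snd ht2))
    (htw'.of_succ_cons heven hk2 ht hgk (hfg.adj_snd ht2))

lemma NoFarSquare.succ (hk : k % 2 = 1) (hO : FarPairUnique f g k) :
    NoFarSquare f g (k + 1) := by
  have wedge : ∀ x y z : Fin (n + 2), y ≠ z → IsFarPair f g (k + 1) x y →
      IsFarPair f g (k + 1) x z → x.val ≤ k → y.val ≤ k → z.val ≤ k → False := by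
    intro x y z hyz hxy hxz hx hy hz
    rcases Sym2.eq_iff.1 (hO _ _ _ _ (hxy.of_succ hk hx hy) (hxz.of_succ hk hx hz)) with
      ⟨-, h⟩ | ⟨h, -⟩
    · exact hyz h
    · exact hxz.1 h
  have below : ∀ x y : Fin (n + 2),
      x.val = k + 1 → y.val ≤ k + 1 → y ≠ x → y.val ≤ k :=
    fun x y hx hy hne => by
      have : y.val ≠ x.val := fun h => hne (Fin.ext h)
      omega
  intro a b v w hab hvw hav haw hbv hbw
  by_cases ha : a.val = k + 1
  · exact wedge b v w hvw hbv hbw (below a b ha hbv.2.1 hab.symm)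
      (below a v ha hav.2.2.1 hav.1.symm) (below a w ha haw.2.2.1 haw.1.symm)
  by_cases hb : b.val = k + 1
  · exact wedge a v w hvw hav haw (below b a hb hav.2.1 hab)
      (below b v hb hbv.2.2.1 hbv.1.symm) (below b w hb hbw.2.2.1 hbw.1.symm)
  have ha' : a.val ≤ k := by have := hav.2.1; omega
  have hb' : b.val ≤ k := by have := hbv.2.1; omega
  by_cases hv : v.val = k + 1
  · exact wedge w a b hab haw.symm hbw.symm (below v w hv haw.2.2.1 hvw.symm) ha' hb'
  have hv' : v.val ≤ k := by have := hav.2.2.1; omega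
  exact wedge v a b hab hav.symm hbv.symm hv' ha' hb'

theorem rainbow_invariant (hfg : ConstructionHyp n f g) (k : ℕ) (hk : 1 ≤ k) :
    ShortRainbowPaths f g k ∧ (k % 2 = 1 → FarPairUnique f g k) ∧
      (k % 2 = 0 → NoFarSquare f g k) := by
  induction k, hk using Nat.le_induction with
  | base => exact ⟨shortRainbowPaths_one, fun _ => farPairUnique_one, by omega⟩
  | succ k hk ih =>
    obtain ⟨hP, hO, hE⟩ := ih
    exact ⟨hP.succ hfg hk hO, fun _ => FarPairUnique.succ hfg hk (by omega) hP (hE (by omega)),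
      fun _ => NoFarSquare.succ (by omega) (hO (by omega))⟩

end Construction

/-- in the construction graph on `n + 2` vertices, any two distinct
vertices are joined by a rainbow path of length at most `⌊(n+2)/2⌋`; moreover when
`n + 2` is even, at most one pair of vertices requires length exactly `(n+2)/2`. -/
theorem rainbow_distance (n : ℕ) (f g : Fin (n + 2) → Fin (n + 2))
    (hfg : ConstructionHyp n f g) :
    (∀ u v : Fin (n + 2), u ≠ v →
      ∃ p : (constructionGraph n f g).Walk u v,
        IsRainbowPath _ edgeColour p ∧ p.length ≤ (n + 2) / 2) ∧
    (2 ∣ (n + 2) → ∀ u v u' v' : Fin (n + 2), u ≠ v → u' ≠ v' →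
      (∀ p : (constructionGraph n f g).Walk u v,
        IsRainbowPath _ edgeColour p → (n + 2) / 2 ≤ p.length) →
      (∀ p : (constructionGraph n f g).Walk u' v',
        IsRainbowPath _ edgeColour p → (n + 2) / 2 ≤ p.length) →
      s(u, v) = s(u', v')) := by
  obtain ⟨hP, hO, -⟩ := rainbow_invariant hfg (n + 1) (by omega)
  have hle : ∀ x : Fin (n + 2), x.val ≤ n + 1 := fun x => Nat.lt_succ_iff.1 x.isLt
  refine ⟨fun u v _ => ?_, fun hn u v u' v' huv huv' hfar hfar' => ?_⟩
  · obtain ⟨p, hp, hlen⟩ := hP u v (hle u) (hle v)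
    exact ⟨p, hp.1, hlen⟩
  · exact hO (by omega) u v u' v' ⟨huv, hle u, hle v, fun p hp => hfar p hp.1⟩
      ⟨huv', hle u', hle v', fun p hp => hfar' p hp.1⟩

end RainbowPaper
end
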